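/- Let (A, d_A) be a differential algebra of weight λ and let (M, d_M) be a differential bimodule over (A, d_A). Then ∂^{n+1}_DA ∘ ∂^n_DA = 0 for every n ≥ 0; that is, (C^•_DA(A, M), ∂^•_DA), the cochain complex of the differential algebra (A, d_A) with coefficients in M, is indeed a cochain complex. -/

import Mathlib

/-- The Hochschild coboundary operator `∂ⁿ_Alg` (see STATEMENT 2). -/
def hochCob (k : Type*) [Field k] (A M : Type*) [NonUnitalRing A] [Module k A]
    [AddCommGroup M] [Module k M]
    (l : A →ₗ[k] M →ₗ[k] M) (r : M →ₗ[k] A →ₗ[k] M)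
    {n : ℕ} (F : (Fin n → A) → M) : (Fin (n + 1) → A) → M :=
  fun a =>
    ((-1 : ℤ) ^ (n + 1)) • l (a 0) (F (Fin.tail a))
      + (∑ i : Fin n, ((-1 : ℤ) ^ (n - (i : ℕ))) •
          F (fun j => if (j : ℕ) < (i : ℕ) then a j.castSucc
             else if (j : ℕ) = (i : ℕ) then a j.castSucc * a j.succ
             else a j.succ))
      + r (F (Fin.init a)) (a (Fin.last n))

/-- The coboundary operator `∂ⁿ_DO` of the differential operator (see STATEMENT 3). -/
def hochDOCob (k : Type*) [Field k] (lam : k) (A M : Type*) [NonUnitalRing A] [Module k A]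
    [AddCommGroup M] [Module k M]
    (l : A →ₗ[k] M →ₗ[k] M) (r : M →ₗ[k] A →ₗ[k] M) (d : A →ₗ[k] A)
    {n : ℕ} (F : (Fin n → A) → M) : (Fin (n + 1) → A) → M :=
  fun a =>
    ((-1 : ℤ) ^ (n + 1)) • l (a 0 + lam • d (a 0)) (F (Fin.tail a))
      + (∑ i : Fin n, ((-1 : ℤ) ^ (n - (i : ℕ))) •
          F (fun j => if (j : ℕ) < (i : ℕ) then a j.castSucc
             else if (j : ℕ) = (i : ℕ) then a j.castSucc * a j.succ
             else a j.succ))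
      + r (F (Fin.init a)) (a (Fin.last n) + lam • d (a (Fin.last n)))

/-- The map `Φⁿ : Cⁿ_Alg(A,M) → Cⁿ_DO(A,M)` (see STATEMENT 4). -/
def PhiMap (k : Type*) [Field k] (lam : k) (A M : Type*) [NonUnitalRing A] [Module k A]
    [AddCommGroup M] [Module k M]
    (d : A →ₗ[k] A) (dM : M →ₗ[k] M)
    {n : ℕ} (F : (Fin n → A) → M) : (Fin n → A) → M :=
  fun a =>
    (∑ S ∈ Finset.univ.powerset.filter (fun S : Finset (Fin n) => S.Nonempty),
        lam ^ (S.card - 1) • F (fun j => if j ∈ S then d (a j) else a j))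
      - dM (F a)


set_option linter.unusedSectionVars false
set_option linter.unreachableTactic false
set_option linter.unusedTactic false
set_option maxHeartbeats 1000000

section DA
variable {k : Type*} [Field k] {A : Type*} [NonUnitalRing A] [Module k A]
  [SMulCommClass k A A] [IsScalarTower k A A]
  {M : Type*} [AddCommGroup M] [Module k M]

/-- merge positions i, i+1 by multiplication -/
def mrg (i : ℕ) {n : ℕ} (a : Fin (n+1) → A) : Fin n → A :=
  fun j => if (j:ℕ) < i then a j.castSucc
    else if (j:ℕ) = i then a j.castSucc * a j.succ else a j.succ

lemma mrg_of_ge {i n : ℕ} (h : n ≤ i) (a : Fin (n+1) → A) : mrg i a = Fin.init a := by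
  funext j
  simp only [mrg, Fin.init]
  rw [if_pos (lt_of_lt_of_le j.isLt h)]

lemma mrg_mrg {i j n : ℕ} (h : i ≤ j) (a : Fin (n+2) → A) :
    mrg j (mrg i a) = mrg i (mrg (j+1) a) := by
  funext t
  simp only [mrg, Fin.coe_castSucc, Fin.val_succ, Fin.succ_castSucc]
  split_ifs <;> first | rfl | omega | rw [mul_assoc]

lemma tail_mrg_succ {i n : ℕ} (a : Fin (n+2) → A) :
    Fin.tail (mrg (i+1) a) = mrg i (Fin.tail a) := by
  funext t
  have ht := t.isLt
  simp only [Fin.tail, mrg, Fin.coe_castSucc, Fin.val_succ, Fin.succ_castSucc]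
  split_ifs <;> first | rfl | omega

lemma tail_mrg_zero {n : ℕ} (a : Fin (n+2) → A) :
    Fin.tail (mrg 0 a) = Fin.tail (Fin.tail a) := by
  funext t
  have ht := t.isLt
  simp only [Fin.tail, mrg, Fin.coe_castSucc, Fin.val_succ, Fin.succ_castSucc]
  rw [if_neg (by omega), if_neg (by omega)]

lemma mrg_succ_zero {i n : ℕ} (a : Fin (n+2) → A) : (mrg (i+1) a) 0 = a 0 := by
  simp [mrg]

lemma mrg_zero_zero {n : ℕ} (a : Fin (n+2) → A) :
    (mrg 0 a) 0 = a 0 * a 1 := by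
  simp [mrg]

lemma init_mrg {i n : ℕ} (a : Fin (n+2) → A) :
    Fin.init (mrg i a) = mrg i (Fin.init a) := by
  funext t
  have ht := t.isLt
  simp only [Fin.init, mrg, Fin.coe_castSucc, Fin.val_succ, Fin.succ_castSucc]
  try split_ifs <;> first | rfl | omega

lemma mrg_last {i n : ℕ} (h : i < n) (a : Fin (n+2) → A) :
    (mrg i a) (Fin.last n) = a (Fin.last (n+1)) := by
  simp only [mrg, Fin.val_last]
  rw [if_neg (by omega), if_neg (by omega), Fin.succ_last]

lemma mrg_last_top {n : ℕ} (a : Fin (n+2) → A) :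
    (mrg n a) (Fin.last n) = a ((Fin.last n).castSucc) * a ((Fin.last n).succ) := by
  simp only [mrg, Fin.val_last]
  rw [if_neg (by omega)]
  simp

lemma init_apply_last {n : ℕ} (a : Fin (n+2) → A) :
    (Fin.init a) (Fin.last n) = a ((Fin.last n).castSucc) := rfl

lemma tail_apply_last {n : ℕ} (a : Fin (n+2) → A) :
    (Fin.tail a) (Fin.last n) = a (Fin.last (n+1)) := by
  rfl

lemma tail_init_comm {n : ℕ} (a : Fin (n+2) → A) :
    Fin.tail (Fin.init a) = Fin.init (Fin.tail a) := by
  rfl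

lemma tail_zero {n : ℕ} (a : Fin (n+2) → A) : Fin.tail a 0 = a 1 := rfl

lemma init_zero' {n : ℕ} (a : Fin (n+2) → A) : Fin.init a 0 = a 0 := rfl

variable (l : A →ₗ[k] M →ₗ[k] M) (r : M →ₗ[k] A →ₗ[k] M)

/-- the `i`-th coface operator -/
def face {n : ℕ} (i : ℕ) (F : (Fin n → A) → M) (a : Fin (n+1) → A) : M :=
  match i with
  | 0 => l (a 0) (F (Fin.tail a))
  | (i'+1) => if i' < n then F (mrg i' a) else r (F (Fin.init a)) (a (Fin.last n))

lemma face_zero {n : ℕ} (F : (Fin n → A) → M) (a : Fin (n+1) → A) :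
    face l r 0 F a = l (a 0) (F (Fin.tail a)) := rfl

lemma face_mid {n : ℕ} {i : ℕ} (h : i < n) (F : (Fin n → A) → M) (a : Fin (n+1) → A) :
    face l r (i+1) F a = F (mrg i a) := by
  simp only [face, if_pos h]

lemma face_top {n : ℕ} {i : ℕ} (h : n ≤ i) (F : (Fin n → A) → M) (a : Fin (n+1) → A) :
    face l r (i+1) F a = r (F (Fin.init a)) (a (Fin.last n)) := by
  simp only [face, if_neg (not_lt.mpr h)]

lemma hochCob_eq {n : ℕ} (F : (Fin n → A) → M) (a : Fin (n+1) → A) :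
    hochCob k A M l r F a =
      ((-1 : ℤ) ^ (n + 1)) • l (a 0) (F (Fin.tail a))
        + (∑ i ∈ Finset.range n, ((-1 : ℤ) ^ (n - i)) • F (mrg i a))
        + r (F (Fin.init a)) (a (Fin.last n)) := by
  rw [hochCob]
  congr 2
  rw [← Fin.sum_univ_eq_sum_range (fun i => ((-1:ℤ)^(n-i)) • F (mrg i a)) n]
  rfl

lemma hochCob_face {n : ℕ} (F : (Fin n → A) → M) (a : Fin (n+1) → A) :
    hochCob k A M l r F a
      = ∑ i ∈ Finset.range (n+2), ((-1:ℤ)^(n+1-i)) • face l r i F a := by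
  have hS : ∑ i ∈ Finset.range n, ((-1:ℤ)^(n-i)) • F (mrg i a)
      = ∑ i ∈ Finset.range n, ((-1:ℤ)^(n+1-(i+1))) • face l r (i+1) F a :=
    Finset.sum_congr rfl (fun i hi => by
      rw [face_mid l r (Finset.mem_range.mp hi), Nat.succ_sub_succ])
  rw [hochCob_eq, hS, Finset.sum_range_succ' _ (n+1), Finset.sum_range_succ,
    face_zero, Nat.sub_self, pow_zero, one_smul, face_top l r le_rfl, Nat.sub_zero]
  abel


lemma face_comm
    (hl : ∀ (a b : A) (x : M), l (a * b) x = l a (l b x))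
    (hr : ∀ (a b : A) (x : M), r (r x a) b = r x (a * b))
    (hlr : ∀ (a b : A) (x : M), r (l a x) b = l a (r x b))
    {n : ℕ} (i j : ℕ) (hij : i ≤ j) (hjn : j ≤ n+1)
    (F : (Fin n → A) → M) (a : Fin (n+2) → A) :
    face l r (j+1) (face l r i F) a = face l r i (face l r j F) a := by
  rcases j with _ | j'
  · -- j = 0, hence i = 0
    have hi : i = 0 := Nat.le_zero.mp hij
    subst hi
    rw [face_mid l r (by omega : 0 < n+1), face_zero, face_zero, face_zero,
      mrg_zero_zero, tail_mrg_zero, hl, tail_zero]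
  · rcases Nat.lt_or_ge j' n with hj' | hj'
    · -- middle face j = j'+1, j' < n
      rcases i with _ | i'
      · rw [face_mid l r (by omega : j'+1 < n+1), face_zero, face_zero,
          face_mid l r hj', mrg_succ_zero, tail_mrg_succ]
      · -- 1 ≤ i ≤ j ; i' ≤ j' < n
        have hi' : i' ≤ j' := by omega
        rw [face_mid l r (by omega : j'+1 < n+1), face_mid l r (by omega : i' < n),
          face_mid l r (by omega : i' < n+1), face_mid l r hj', mrg_mrg hi']
    · -- j = n+1
      have hj'' : n = j' := by omega
      subst hj''
      rcases i with _ | i'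
      · rw [face_top l r (by omega : n+1 ≤ n+1), face_zero, face_zero,
          face_top l r le_rfl, hlr, tail_init_comm, tail_apply_last, init_zero']
      · rcases Nat.lt_or_ge i' n with hi' | hi'
        · rw [face_top l r (by omega : n+1 ≤ n+1), face_mid l r hi',
            face_mid l r (by omega : i' < n+1), face_top l r le_rfl,
            init_mrg, mrg_last hi']
        · -- i = j = n+1
          have hi'' : n = i' := by omega
          subst hi''
          rw [face_top l r (by omega : n+1 ≤ n+1), face_top l r le_rfl,
            face_mid l r (by omega : n < n+1), face_top l r le_rfl,
            hr, init_mrg, mrg_of_ge le_rfl, mrg_last_top, init_apply_last,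
            Fin.succ_last]


lemma face_comb {n : ℕ} (i : ℕ) (s : Finset ℕ) (c : ℕ → ℤ)
    (G : ℕ → ((Fin n → A) → M)) (a : Fin (n+1) → A) :
    face l r i (fun b => ∑ j ∈ s, c j • G j b) a = ∑ j ∈ s, c j • face l r i (G j) a := by
  match i with
  | 0 => simp only [face_zero, map_sum, map_zsmul]
  | (i'+1) =>
    rcases Nat.lt_or_ge i' n with h | h
    · simp only [face_mid l r h]
    · simp only [face_top l r h]
      have hflip : ∀ x : M, r x (a (Fin.last n)) = (r.flip (a (Fin.last n))) x := fun _ => rfl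
      rw [hflip, map_sum]
      exact Finset.sum_congr rfl (fun j _ => by rw [map_zsmul]; rfl)

theorem hochCob_hochCob
    (hl : ∀ (a b : A) (x : M), l (a * b) x = l a (l b x))
    (hr : ∀ (a b : A) (x : M), r (r x a) b = r x (a * b))
    (hlr : ∀ (a b : A) (x : M), r (l a x) b = l a (r x b))
    {n : ℕ} (F : (Fin n → A) → M) :
    hochCob k A M l r (hochCob k A M l r F) = 0 := by
  funext a
  rw [hochCob_face]
  have hrw : (hochCob k A M l r F)
      = fun b => ∑ j ∈ Finset.range (n+2), ((-1:ℤ)^(n+1-j)) • face l r j F b :=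
    funext (fun b => hochCob_face l r F b)
  rw [hrw]
  simp only [face_comb]
  simp only [Finset.smul_sum, smul_smul]
  rw [← Finset.sum_product']
  show ∑ p ∈ Finset.range (n+3) ×ˢ Finset.range (n+2),
      ((-1:ℤ)^(n+2-p.1) * (-1:ℤ)^(n+1-p.2)) • face l r p.1 (face l r p.2 F) a = 0
  have key : ∀ i j : ℕ, i ≤ j → j ≤ n+1 →
      ((-1:ℤ)^(n+2-i) * (-1:ℤ)^(n+1-j)) • face l r i (face l r j F) a
        + ((-1:ℤ)^(n+2-(j+1)) * (-1:ℤ)^(n+1-i)) • face l r (j+1) (face l r i F) a = 0 := by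
    intro i j hij hj
    rw [face_comm l r hl hr hlr i j hij hj]
    have hsgn : ((-1:ℤ)^(n+2-i) * (-1:ℤ)^(n+1-j))
        = -((-1:ℤ)^(n+2-(j+1)) * (-1:ℤ)^(n+1-i)) := by
      have e1 : n+2-i = (n+1-i)+1 := by omega
      have e2 : n+2-(j+1) = n+1-j := by omega
      rw [e1, e2, pow_succ]; ring
    rw [hsgn, neg_smul]
    exact neg_add_cancel _
  refine Finset.sum_involution
    (fun p _ => if p.1 ≤ p.2 then (p.2+1, p.1) else (p.2, p.1-1)) ?_ ?_ ?_ ?_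
  · rintro ⟨i, j⟩ hp
    simp only [Finset.mem_product, Finset.mem_range] at hp
    by_cases hc : i ≤ j
    · simp only [if_pos hc]
      exact key i j hc (by omega)
    · simp only [if_neg hc]
      have h2 := key j (i-1) (by omega) (by omega)
      rw [show (i-1)+1 = i by omega] at h2
      rw [add_comm]
      exact h2
  · rintro ⟨i, j⟩ hp _
    by_cases hc : i ≤ j
    · simp only [if_pos hc, ne_eq, Prod.mk.injEq]
      omega
    · simp only [if_neg hc, ne_eq, Prod.mk.injEq]
      omega
  · rintro ⟨i, j⟩ hp
    simp only [Finset.mem_product, Finset.mem_range] at hp ⊢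
    by_cases hc : i ≤ j
    · simp only [if_pos hc]; omega
    · simp only [if_neg hc]; omega
  · rintro ⟨i, j⟩ hp
    by_cases hc : i ≤ j
    · simp only [if_pos hc, if_neg (by omega : ¬ j+1 ≤ i)]
      show (i, j+1-1) = (i, j)
      simp
    · simp only [if_neg hc, if_pos (by omega : j ≤ i-1)]
      show (i-1+1, j) = (i, j)
      rw [show i-1+1 = i by omega]


variable (lam : k) (d : A →ₗ[k] A)

/-- `D = id + λ d` -/
def Dop : A →ₗ[k] A := LinearMap.id + lam • d

lemma Dop_apply (u : A) : Dop lam d u = u + lam • d u := rfl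

lemma Dop_mul (hd : ∀ u v : A, d (u * v) = d u * v + u * d v + lam • (d u * d v))
    (u v : A) : Dop lam d (u * v) = Dop lam d u * Dop lam d v := by
  simp only [Dop_apply, hd, mul_add, add_mul, smul_add, smul_mul_assoc, mul_smul_comm,
    smul_smul]
  abel

lemma hochDOCob_eq_hochCob {n : ℕ} (F : (Fin n → A) → M) :
    hochDOCob k lam A M l r d F
      = hochCob k A M (l.comp (Dop lam d)) (r.compl₂ (Dop lam d)) F := by
  funext a
  simp only [hochDOCob, hochCob, LinearMap.comp_apply, LinearMap.compl₂_apply, Dop_apply]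

theorem hochDOCob_hochDOCob
    (hl : ∀ (a b : A) (x : M), l (a * b) x = l a (l b x))
    (hr : ∀ (a b : A) (x : M), r (r x a) b = r x (a * b))
    (hlr : ∀ (a b : A) (x : M), r (l a x) b = l a (r x b))
    (hd : ∀ u v : A, d (u * v) = d u * v + u * d v + lam • (d u * d v))
    {n : ℕ} (F : (Fin n → A) → M) :
    hochDOCob k lam A M l r d (hochDOCob k lam A M l r d F) = 0 := by
  rw [hochDOCob_eq_hochCob, hochDOCob_eq_hochCob]
  refine hochCob_hochCob _ _ ?_ ?_ ?_ F
  · intro a b x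
    simp only [LinearMap.comp_apply, Dop_mul lam d hd, hl]
  · intro a b x
    simp only [LinearMap.compl₂_apply, Dop_mul lam d hd, hr]
  · intro a b x
    simp only [LinearMap.comp_apply, LinearMap.compl₂_apply, hlr]


lemma face_addF {n : ℕ} (i : ℕ) (F G : (Fin n → A) → M) (a : Fin (n+1) → A) :
    face l r i (fun b => F b + G b) a = face l r i F a + face l r i G a := by
  match i with
  | 0 => simp only [face_zero, map_add]
  | (i'+1) =>
    rcases Nat.lt_or_ge i' n with h | h
    · simp only [face_mid l r h]
    · simp only [face_top l r h, map_add, LinearMap.add_apply]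

lemma face_smulF {n : ℕ} (i : ℕ) (c : k) (F : (Fin n → A) → M) (a : Fin (n+1) → A) :
    face l r i (fun b => c • F b) a = c • face l r i F a := by
  match i with
  | 0 => simp only [face_zero, map_smul]
  | (i'+1) =>
    rcases Nat.lt_or_ge i' n with h | h
    · simp only [face_mid l r h]
    · simp only [face_top l r h, map_smul, LinearMap.smul_apply]

lemma face_negF {n : ℕ} (i : ℕ) (F : (Fin n → A) → M) (a : Fin (n+1) → A) :
    face l r i (fun b => -(F b)) a = -(face l r i F a) := by
  match i with
  | 0 => simp only [face_zero, map_neg]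
  | (i'+1) =>
    rcases Nat.lt_or_ge i' n with h | h
    · simp only [face_mid l r h]
    · simp only [face_top l r h, map_neg, LinearMap.neg_apply]

lemma hochCob_addF {n : ℕ} (F G : (Fin n → A) → M) (a : Fin (n+1) → A) :
    hochCob k A M l r (fun b => F b + G b) a
      = hochCob k A M l r F a + hochCob k A M l r G a := by
  rw [hochCob_face, hochCob_face, hochCob_face, ← Finset.sum_add_distrib]
  exact Finset.sum_congr rfl fun i _ => by rw [face_addF, smul_add]

lemma hochCob_smulF {n : ℕ} (c : k) (F : (Fin n → A) → M) (a : Fin (n+1) → A) :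
    hochCob k A M l r (fun b => c • F b) a = c • hochCob k A M l r F a := by
  rw [hochCob_face, hochCob_face, Finset.smul_sum]
  exact Finset.sum_congr rfl fun i _ => by rw [face_smulF, smul_comm]

lemma hochCob_negF {n : ℕ} (F : (Fin n → A) → M) (a : Fin (n+1) → A) :
    hochCob k A M l r (fun b => -(F b)) a = -(hochCob k A M l r F a) := by
  rw [hochCob_face, hochCob_face, ← Finset.sum_neg_distrib]
  exact Finset.sum_congr rfl fun i _ => by rw [face_negF, smul_neg]

lemma hochCob_subF {n : ℕ} (F G : (Fin n → A) → M) (a : Fin (n+1) → A) :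
    hochCob k A M l r (fun b => F b - G b) a
      = hochCob k A M l r F a - hochCob k A M l r G a := by
  have : (fun b => F b - G b) = fun b => F b + -(G b) := by funext b; rw [sub_eq_add_neg]
  rw [this, hochCob_addF, hochCob_negF, sub_eq_add_neg]

lemma mrg_D (hd : ∀ u v : A, d (u * v) = d u * v + u * d v + lam • (d u * d v))
    {n : ℕ} (i : ℕ) (b : Fin (n+1) → A) :
    mrg i (fun j => Dop lam d (b j)) = fun t => Dop lam d (mrg i b t) := by
  funext t
  simp only [mrg]
  split_ifs <;> first | rfl | rw [Dop_mul lam d hd]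

lemma DO_conj (hd : ∀ u v : A, d (u * v) = d u * v + u * d v + lam • (d u * d v))
    {n : ℕ} (F : (Fin n → A) → M) (b : Fin (n+1) → A) :
    hochDOCob k lam A M l r d (fun x => F (fun j => Dop lam d (x j))) b
      = hochCob k A M l r F (fun j => Dop lam d (b j)) := by
  rw [hochDOCob_eq_hochCob, hochCob_eq, hochCob_eq]
  simp only [LinearMap.comp_apply, LinearMap.compl₂_apply, mrg_D lam d hd,
    show Fin.tail (fun j => Dop lam d (b j)) = fun t => Dop lam d (Fin.tail b t) from rfl,
    show Fin.init (fun j => Dop lam d (b j)) = fun t => Dop lam d (Fin.init b t) from rfl]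


variable (dM : M →ₗ[k] M)

lemma DO_dM
    (hdl : ∀ (a : A) (x : M), dM (l a x) = l (d a) x + l a (dM x) + lam • l (d a) (dM x))
    (hdr : ∀ (a : A) (x : M), dM (r x a) = r x (d a) + r (dM x) a + lam • r (dM x) (d a))
    {n : ℕ} (F : (Fin n → A) → M) (b : Fin (n+1) → A) :
    hochDOCob k lam A M l r d (fun x => dM (F x)) b
      = dM (hochCob k A M l r F b)
        - ((-1:ℤ)^(n+1)) • l (d (b 0)) (F (Fin.tail b))
        - r (F (Fin.init b)) (d (b (Fin.last n))) := by
  have hdl' : ∀ (a : A) (x : M), l (Dop lam d a) (dM x) = dM (l a x) - l (d a) x := by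
    intro a x
    rw [hdl, Dop_apply, map_add, map_smul, LinearMap.add_apply, LinearMap.smul_apply]
    abel
  have hdr' : ∀ (a : A) (x : M), r (dM x) (Dop lam d a) = dM (r x a) - r x (d a) := by
    intro a x
    rw [hdr, Dop_apply, map_add, map_smul]
    abel
  rw [hochDOCob_eq_hochCob, hochCob_eq, hochCob_eq]
  rw [map_add, map_add, map_sum]
  simp only [LinearMap.comp_apply, LinearMap.compl₂_apply, hdl', hdr', map_zsmul, smul_sub]
  abel

lemma DO_expand {n : ℕ} (F : (Fin n → A) → M) (b : Fin (n+1) → A) :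
    hochDOCob k lam A M l r d F b
      = hochCob k A M l r F b
        + lam • (((-1:ℤ)^(n+1)) • l (d (b 0)) (F (Fin.tail b))
                  + r (F (Fin.init b)) (d (b (Fin.last n)))) := by
  rw [hochDOCob_eq_hochCob, hochCob_eq, hochCob_eq]
  simp only [LinearMap.comp_apply, LinearMap.compl₂_apply, Dop_apply, map_add, map_smul,
    LinearMap.add_apply, LinearMap.smul_apply, smul_add]
  rw [smul_comm lam]
  abel


lemma U1 {n : ℕ} {i : ℕ} {p : Fin (n+1)} (h : (p:ℕ) < i) (hp : (p:ℕ) < n)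
    (a : Fin (n+1) → A) (z : A) :
    mrg i (Function.update a p z) = Function.update (mrg i a) ⟨(p:ℕ), hp⟩ z := by
  funext t
  have ht := t.isLt
  simp only [mrg, Function.update_apply, Fin.ext_iff, Fin.coe_castSucc, Fin.val_succ]
  split_ifs <;> first | rfl | omega

lemma U2 {n : ℕ} {i : ℕ} {p : Fin (n+1)} (h : (p:ℕ) = i) (hi : i < n)
    (a : Fin (n+1) → A) (z : A) :
    mrg i (Function.update a p z)
      = Function.update (mrg i a) ⟨i, hi⟩ (z * a ⟨i+1, by omega⟩) := by
  funext t
  have ht := t.isLt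
  simp only [mrg, Function.update_apply, Fin.ext_iff, Fin.coe_castSucc, Fin.val_succ]
  split_ifs <;> first | rfl | omega | (congr 1 <;> first | omega | (apply congrArg; exact Fin.ext (by simp; omega)))

lemma U3 {n : ℕ} {i : ℕ} {p : Fin (n+1)} (h : (p:ℕ) = i+1) (hi : i < n)
    (a : Fin (n+1) → A) (z : A) :
    mrg i (Function.update a p z)
      = Function.update (mrg i a) ⟨i, hi⟩ (a ⟨i, by omega⟩ * z) := by
  funext t
  have ht := t.isLt
  simp only [mrg, Function.update_apply, Fin.ext_iff, Fin.coe_castSucc, Fin.val_succ]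
  split_ifs <;> first | rfl | omega | (congr 1 <;> first | omega | (apply congrArg; exact Fin.ext (by simp; omega)))

lemma U4 {n : ℕ} {i : ℕ} {p : Fin (n+1)} (h : i+1 < (p:ℕ)) (hp : (p:ℕ) - 1 < n)
    (a : Fin (n+1) → A) (z : A) :
    mrg i (Function.update a p z) = Function.update (mrg i a) ⟨(p:ℕ)-1, hp⟩ z := by
  funext t
  have ht := t.isLt
  simp only [mrg, Function.update_apply, Fin.ext_iff, Fin.coe_castSucc, Fin.val_succ]
  split_ifs <;> first | rfl | omega


lemma G_lemma {m : ℕ} (f : MultilinearMap k (fun _ : Fin m => A) M) (a : Fin m → A) :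
    lam • (∑ S ∈ Finset.univ.powerset.filter (fun S : Finset (Fin m) => S.Nonempty),
        lam ^ (S.card - 1) • f (fun j => if j ∈ S then d (a j) else a j))
      = f (fun j => a j + lam • d (a j)) - f a := by
  have hpc : ∀ S : Finset (Fin m),
      S.piecewise (fun j => d (a j)) a = fun j => if j ∈ S then d (a j) else a j := by
    intro S; funext j; simp [Finset.piecewise]
  have h1 : f (fun j => a j + lam • d (a j))
      = ∑ S : Finset (Fin m), lam ^ S.card • f (fun j => if j ∈ S then d (a j) else a j) := by
    have h0 := f.map_add_univ (fun j => lam • d (a j)) a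
    have he : (fun j => a j + lam • d (a j)) = (fun j => lam • d (a j)) + a := by
      funext j; simp [add_comm]
    rw [he, h0]
    refine Finset.sum_congr rfl fun S _ => ?_
    have hz : S.piecewise (fun j => lam • d (a j)) a
        = S.piecewise (fun j => lam • (S.piecewise (fun j' => d (a j')) a) j)
            (S.piecewise (fun j' => d (a j')) a) := by
      funext j
      by_cases hj : j ∈ S
      · simp [Finset.piecewise_eq_of_mem _ _ _ hj]
      · simp [Finset.piecewise_eq_of_notMem _ _ _ hj]
    rw [hz, f.map_piecewise_smul (fun _ => lam) _ S, Finset.prod_const, hpc]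
  have h2 : ∑ S : Finset (Fin m), lam ^ S.card • f (fun j => if j ∈ S then d (a j) else a j)
      = (∑ S ∈ Finset.univ.powerset.filter (fun S : Finset (Fin m) => S.Nonempty),
          lam ^ S.card • f (fun j => if j ∈ S then d (a j) else a j)) + f a := by
    rw [Finset.powerset_univ]
    rw [← Finset.sum_filter_add_sum_filter_not Finset.univ
      (fun S : Finset (Fin m) => S.Nonempty)]
    congr 1
    have : Finset.univ.filter (fun S : Finset (Fin m) => ¬ S.Nonempty) = {∅} := by
      ext S
      simp [Finset.not_nonempty_iff_eq_empty]
    rw [this, Finset.sum_singleton]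
    simp
  rw [Finset.smul_sum, h1, h2]
  have h3 : ∀ S ∈ Finset.univ.powerset.filter (fun S : Finset (Fin m) => S.Nonempty),
      lam • lam ^ (S.card - 1) • f (fun j => if j ∈ S then d (a j) else a j)
        = lam ^ S.card • f (fun j => if j ∈ S then d (a j) else a j) := by
    intro S hS
    have hne : S.Nonempty := by simpa using (Finset.mem_filter.mp hS).2
    have hc : S.card - 1 + 1 = S.card := Nat.succ_pred_eq_of_pos (Finset.card_pos.mpr hne)
    rw [smul_smul, ← pow_succ', hc]
  rw [Finset.sum_congr rfl h3]
  abel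


lemma face_update_add {n : ℕ} (f : MultilinearMap k (fun _ : Fin n => A) M)
    (i : ℕ) (a : Fin (n+1) → A) (p : Fin (n+1)) (x y : A) :
    face l r i (⇑f) (Function.update a p (x+y))
      = face l r i (⇑f) (Function.update a p x) + face l r i (⇑f) (Function.update a p y) := by
  match i with
  | 0 =>
    simp only [face_zero]
    induction p using Fin.cases with
    | zero =>
      simp only [Function.update_self, Fin.tail_update_zero, map_add, LinearMap.add_apply]
    | succ q =>
      rw [Function.update_of_ne (Fin.succ_ne_zero q).symm,
        Function.update_of_ne (Fin.succ_ne_zero q).symm,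
        Function.update_of_ne (Fin.succ_ne_zero q).symm,
        Fin.tail_update_succ, Fin.tail_update_succ, Fin.tail_update_succ,
        f.map_update_add, map_add]
  | (i'+1) =>
    rcases Nat.lt_or_ge i' n with h | h
    · simp only [face_mid l r h]
      rcases lt_trichotomy (p:ℕ) i' with hp | hp | hp
      · have hpn : (p:ℕ) < n := by omega
        rw [U1 hp hpn, U1 hp hpn, U1 hp hpn, f.map_update_add]
      · rw [U2 hp h, U2 hp h, U2 hp h, add_mul, f.map_update_add]
      · rcases Nat.eq_or_lt_of_le hp with hp2 | hp2
        · rw [U3 hp2.symm h, U3 hp2.symm h, U3 hp2.symm h, mul_add, f.map_update_add]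
        · have hpn : (p:ℕ) - 1 < n := by have := p.isLt; omega
          rw [U4 hp2 hpn, U4 hp2 hpn, U4 hp2 hpn, f.map_update_add]
    · simp only [face_top l r h]
      induction p using Fin.lastCases with
      | last =>
        simp only [Fin.init_update_last, Function.update_self, map_add]
      | cast q =>
        have hne : Fin.last n ≠ q.castSucc := (Fin.castSucc_lt_last q).ne'
        rw [Function.update_of_ne hne, Function.update_of_ne hne, Function.update_of_ne hne,
          Fin.init_update_castSucc, Fin.init_update_castSucc, Fin.init_update_castSucc,
          f.map_update_add, map_add, LinearMap.add_apply]

lemma face_update_smul {n : ℕ} (f : MultilinearMap k (fun _ : Fin n => A) M)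
    (i : ℕ) (a : Fin (n+1) → A) (p : Fin (n+1)) (c : k) (x : A) :
    face l r i (⇑f) (Function.update a p (c • x))
      = c • face l r i (⇑f) (Function.update a p x) := by
  match i with
  | 0 =>
    simp only [face_zero]
    induction p using Fin.cases with
    | zero =>
      simp only [Function.update_self, Fin.tail_update_zero, map_smul, LinearMap.smul_apply]
    | succ q =>
      rw [Function.update_of_ne (Fin.succ_ne_zero q).symm,
        Function.update_of_ne (Fin.succ_ne_zero q).symm,
        Fin.tail_update_succ, Fin.tail_update_succ, f.map_update_smul, map_smul]
  | (i'+1) =>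
    rcases Nat.lt_or_ge i' n with h | h
    · simp only [face_mid l r h]
      rcases lt_trichotomy (p:ℕ) i' with hp | hp | hp
      · have hpn : (p:ℕ) < n := by omega
        rw [U1 hp hpn, U1 hp hpn, f.map_update_smul]
      · rw [U2 hp h, U2 hp h, smul_mul_assoc, f.map_update_smul]
      · rcases Nat.eq_or_lt_of_le hp with hp2 | hp2
        · rw [U3 hp2.symm h, U3 hp2.symm h, mul_smul_comm, f.map_update_smul]
        · have hpn : (p:ℕ) - 1 < n := by have := p.isLt; omega
          rw [U4 hp2 hpn, U4 hp2 hpn, f.map_update_smul]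
    · simp only [face_top l r h]
      induction p using Fin.lastCases with
      | last =>
        simp only [Fin.init_update_last, Function.update_self, map_smul]
      | cast q =>
        have hne : Fin.last n ≠ q.castSucc := (Fin.castSucc_lt_last q).ne'
        rw [Function.update_of_ne hne, Function.update_of_ne hne,
          Fin.init_update_castSucc, Fin.init_update_castSucc,
          f.map_update_smul, map_smul, LinearMap.smul_apply]

/-- the Hochschild coboundary of a multilinear map, as a multilinear map -/
def hochCobML {n : ℕ} (f : MultilinearMap k (fun _ : Fin n => A) M) :
    MultilinearMap k (fun _ : Fin (n+1) => A) M where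
  toFun := hochCob k A M l r ⇑f
  map_update_add' := by
    intro inst a p x y
    obtain rfl : inst = instDecidableEqFin (n+1) := Subsingleton.elim _ _
    rw [hochCob_face, hochCob_face, hochCob_face, ← Finset.sum_add_distrib]
    exact Finset.sum_congr rfl fun i _ => by rw [face_update_add, smul_add]
  map_update_smul' := by
    intro inst a p c x
    obtain rfl : inst = instDecidableEqFin (n+1) := Subsingleton.elim _ _
    rw [hochCob_face, hochCob_face, Finset.smul_sum]
    exact Finset.sum_congr rfl fun i _ => by rw [face_update_smul, smul_comm]

lemma hochCobML_coe {n : ℕ} (f : MultilinearMap k (fun _ : Fin n => A) M) :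
    ⇑(hochCobML l r f) = hochCob k A M l r ⇑f := rfl


/-- apply `d` at position `j` -/
def updN (j : ℕ) {p : ℕ} (a : Fin p → A) : Fin p → A :=
  fun t => if (t:ℕ) = j then d (a t) else a t

/-- sum of `d` applied at a single position -/
def psi0 {p : ℕ} (F : (Fin p → A) → M) (a : Fin p → A) : M :=
  ∑ j ∈ Finset.range p, F (updN d j a)

lemma DO_zero {n : ℕ} (F : (Fin n → A) → M) :
    hochDOCob k 0 A M l r d F = hochCob k A M l r F := by
  funext a
  simp only [hochDOCob, hochCob, zero_smul, add_zero]

lemma PhiMap_zero {p : ℕ} (F : (Fin p → A) → M) (a : Fin p → A) :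
    PhiMap k 0 A M d dM F a = psi0 d F a - dM (F a) := by
  rw [PhiMap, psi0]
  congr 1
  have hsub : Finset.univ.image (fun j : Fin p => ({j} : Finset (Fin p)))
      ⊆ Finset.univ.powerset.filter (fun S : Finset (Fin p) => S.Nonempty) := by
    intro S hS
    simp only [Finset.mem_image] at hS
    obtain ⟨j, _, rfl⟩ := hS
    simp
  rw [← Finset.sum_subset hsub]
  · rw [Finset.sum_image (fun j _ j' _ h => Finset.singleton_injective h)]
    rw [← Fin.sum_univ_eq_sum_range (fun j => F (updN d j a)) p]
    refine Finset.sum_congr rfl fun j _ => ?_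
    rw [Finset.card_singleton, Nat.sub_self, pow_zero, one_smul]
    congr 1
    funext t
    simp only [Finset.mem_singleton, updN, Fin.ext_iff]
  · intro S hS hS'
    have hne : S.Nonempty := by
      simpa using (Finset.mem_filter.mp hS).2
    have hcard : S.card ≠ 1 := by
      intro hc
      obtain ⟨j, rfl⟩ := Finset.card_eq_one.mp hc
      exact hS' (Finset.mem_image.mpr ⟨j, Finset.mem_univ j, rfl⟩)
    have h2 : 1 ≤ S.card := Finset.card_pos.mpr hne
    rw [zero_pow (by omega : S.card - 1 ≠ 0), zero_smul]

lemma sum_range_merge {β : Type*} [AddCommMonoid β] {N i : ℕ} (hi : i < N) (g h : ℕ → β)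
    (h1 : ∀ j, j < i → g j = h j)
    (h2 : g i + g (i+1) = h i)
    (h3 : ∀ j, i < j → j < N → g (j+1) = h j) :
    ∑ j ∈ Finset.range (N+1), g j = ∑ j ∈ Finset.range N, h j := by
  rw [Finset.range_eq_Ico,
    ← Finset.sum_Ico_consecutive _ (Nat.zero_le i) (by omega : i ≤ N+1),
    Finset.sum_eq_sum_Ico_succ_bot (by omega : i < N+1),
    Finset.sum_eq_sum_Ico_succ_bot (by omega : i+1 < N+1)]
  rw [Finset.range_eq_Ico, ← Finset.sum_Ico_consecutive _ (Nat.zero_le i) (by omega : i ≤ N),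
    Finset.sum_eq_sum_Ico_succ_bot (by omega : i < N)]
  have e1 : ∑ j ∈ Finset.Ico 0 i, g j = ∑ j ∈ Finset.Ico 0 i, h j :=
    Finset.sum_congr rfl fun j hj => h1 j (Finset.mem_Ico.mp hj).2
  have e2 : ∑ j ∈ Finset.Ico (i+2) (N+1), g j = ∑ j ∈ Finset.Ico (i+1) N, h j := by
    rw [Finset.sum_Ico_eq_sum_range, Finset.sum_Ico_eq_sum_range]
    have : N + 1 - (i+2) = N - (i+1) := by omega
    rw [this]
    refine Finset.sum_congr rfl fun t ht => ?_
    have ht' := Finset.mem_range.mp ht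
    have : i + 2 + t = (i + 1 + t) + 1 := by omega
    rw [this]
    exact h3 (i+1+t) (by omega) (by omega)
  rw [e1, e2, ← h2]
  abel


lemma updN_zero_zero {m : ℕ} (b : Fin (m+1) → A) : updN d 0 b 0 = d (b 0) := by
  simp [updN]

lemma tail_updN_zero {m : ℕ} (b : Fin (m+1) → A) :
    Fin.tail (updN d 0 b) = Fin.tail b := by
  funext t
  simp only [Fin.tail, updN, Fin.val_succ]
  rw [if_neg (by omega)]

lemma updN_succ_zero {m : ℕ} (j : ℕ) (b : Fin (m+1) → A) : updN d (j+1) b 0 = b 0 := by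
  simp [updN]

lemma tail_updN_succ {m : ℕ} (j : ℕ) (b : Fin (m+1) → A) :
    Fin.tail (updN d (j+1) b) = updN d j (Fin.tail b) := by
  funext t
  simp only [Fin.tail, updN, Fin.val_succ]
  split_ifs <;> first | rfl | omega

lemma init_updN_ge {m : ℕ} {j : ℕ} (h : m ≤ j) (b : Fin (m+1) → A) :
    Fin.init (updN d j b) = Fin.init b := by
  funext t
  have ht := t.isLt
  simp only [Fin.init, updN, Fin.coe_castSucc]
  rw [if_neg (by omega)]

lemma updN_last {m : ℕ} (b : Fin (m+1) → A) :
    updN d m b (Fin.last m) = d (b (Fin.last m)) := by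
  simp [updN]

lemma init_updN_lt {m : ℕ} {j : ℕ} (h : j < m) (b : Fin (m+1) → A) :
    Fin.init (updN d j b) = updN d j (Fin.init b) := by
  funext t
  simp only [Fin.init, updN, Fin.coe_castSucc]

lemma updN_last_ne {m : ℕ} {j : ℕ} (h : j < m) (b : Fin (m+1) → A) :
    updN d j b (Fin.last m) = b (Fin.last m) := by
  simp only [updN, Fin.val_last]
  rw [if_neg (by omega)]

lemma V1 {n : ℕ} {i j : ℕ} (h : j < i) (b : Fin (n+1) → A) :
    mrg i (updN d j b) = updN d j (mrg i b) := by
  funext t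
  have ht := t.isLt
  simp only [mrg, updN, Fin.coe_castSucc, Fin.val_succ]
  split_ifs <;> first | rfl | omega

lemma V4 {n : ℕ} {i j : ℕ} (h : i < j) (b : Fin (n+1) → A) :
    mrg i (updN d (j+1) b) = updN d j (mrg i b) := by
  funext t
  have ht := t.isLt
  simp only [mrg, updN, Fin.coe_castSucc, Fin.val_succ]
  split_ifs <;> first | rfl | omega

lemma W {p : ℕ} {j : ℕ} (h : j < p) (c : Fin p → A) :
    updN d j c = Function.update c ⟨j, h⟩ (d (c ⟨j, h⟩)) := by
  funext t
  simp only [updN, Function.update_apply, Fin.ext_iff, Fin.val_mk]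
  split_ifs <;>
    first
      | rfl
      | omega
      | (apply congrArg; apply congrArg; exact Fin.ext (by simp; omega))

lemma mrg_slot {n : ℕ} {i : ℕ} (hi : i < n) (b : Fin (n+1) → A) :
    (mrg i b) ⟨i, hi⟩ = b ⟨i, by omega⟩ * b ⟨i+1, by omega⟩ := by
  simp only [mrg]
  rw [if_neg (show ¬(((⟨i, hi⟩ : Fin n) : ℕ) < i) from by simp),
    if_pos trivial]
  congr 1 <;> (apply congrArg; exact Fin.ext (by simp))

lemma V2 {n : ℕ} {i : ℕ} (hi : i < n) (b : Fin (n+1) → A) :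
    mrg i (updN d i b)
      = Function.update (mrg i b) ⟨i, hi⟩ (d (b ⟨i, by omega⟩) * b ⟨i+1, by omega⟩) := by
  funext t
  have ht := t.isLt
  simp only [mrg, updN, Function.update_apply, Fin.ext_iff, Fin.coe_castSucc, Fin.val_succ,
    Fin.val_mk]
  split_ifs <;>
    first
      | rfl
      | omega
      | (congr 1 <;>
          first
            | (apply congrArg; exact Fin.ext (by simp; omega))
            | (apply congrArg; apply congrArg; exact Fin.ext (by simp; omega)))

lemma V3 {n : ℕ} {i : ℕ} (hi : i < n) (b : Fin (n+1) → A) :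
    mrg i (updN d (i+1) b)
      = Function.update (mrg i b) ⟨i, hi⟩ (b ⟨i, by omega⟩ * d (b ⟨i+1, by omega⟩)) := by
  funext t
  have ht := t.isLt
  simp only [mrg, updN, Function.update_apply, Fin.ext_iff, Fin.coe_castSucc, Fin.val_succ,
    Fin.val_mk]
  split_ifs <;>
    first
      | rfl
      | omega
      | (congr 1 <;>
          first
            | (apply congrArg; exact Fin.ext (by simp; omega))
            | (apply congrArg; apply congrArg; exact Fin.ext (by simp; omega)))


lemma psi0_face_zero {m : ℕ} (F : (Fin m → A) → M) (b : Fin (m+1) → A) :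
    ∑ j ∈ Finset.range (m+1), face l r 0 F (updN d j b)
      = face l r 0 (psi0 d F) b + l (d (b 0)) (F (Fin.tail b)) := by
  rw [Finset.sum_range_succ']
  simp only [face_zero]
  have h1 : ∀ j, l (updN d (j+1) b 0) (F (Fin.tail (updN d (j+1) b)))
      = l (b 0) (F (updN d j (Fin.tail b))) := by
    intro j
    rw [updN_succ_zero, tail_updN_succ]
  have h2 : l (updN d 0 b 0) (F (Fin.tail (updN d 0 b))) = l (d (b 0)) (F (Fin.tail b)) := by
    rw [updN_zero_zero, tail_updN_zero]
  rw [Finset.sum_congr rfl (fun j _ => h1 j), h2, psi0, ← map_sum]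

lemma psi0_face_top {m : ℕ} (F : (Fin m → A) → M) (b : Fin (m+1) → A) :
    ∑ j ∈ Finset.range (m+1), face l r (m+1) F (updN d j b)
      = face l r (m+1) (psi0 d F) b + r (F (Fin.init b)) (d (b (Fin.last m))) := by
  rw [Finset.sum_range_succ]
  simp only [face_top l r (le_refl m)]
  have h1 : ∀ j ∈ Finset.range m, r (F (Fin.init (updN d j b))) (updN d j b (Fin.last m))
      = r (F (updN d j (Fin.init b))) (b (Fin.last m)) := by
    intro j hj
    have hj' := Finset.mem_range.mp hj
    rw [init_updN_lt d hj', updN_last_ne d hj']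
  have h2 : r (F (Fin.init (updN d m b))) (updN d m b (Fin.last m))
      = r (F (Fin.init b)) (d (b (Fin.last m))) := by
    rw [init_updN_ge d le_rfl, updN_last]
  rw [Finset.sum_congr rfl h1, h2, psi0]
  congr 1
  have hflip : ∀ x : M, r x (b (Fin.last m)) = (r.flip (b (Fin.last m))) x := fun _ => rfl
  rw [hflip, map_sum]
  rfl

lemma psi0_face_mid (hd0 : ∀ u v : A, d (u * v) = d u * v + u * d v)
    {m : ℕ} (f : MultilinearMap k (fun _ : Fin m => A) M) {i : ℕ} (hi : i < m)
    (b : Fin (m+1) → A) :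
    ∑ j ∈ Finset.range (m+1), face l r (i+1) (⇑f) (updN d j b)
      = face l r (i+1) (psi0 d ⇑f) b := by
  simp only [face_mid l r hi]
  show _ = psi0 d (⇑f) (mrg i b)
  rw [psi0]
  refine sum_range_merge hi _ _ ?_ ?_ ?_
  · intro j hj
    rw [V1 d hj]
  · rw [V2 d hi, V3 d hi, ← f.map_update_add, ← hd0,
      W d (by omega : i < m) (mrg i b), mrg_slot hi]
  · intro j hj1 hj2
    rw [V4 d hj1]

lemma psi0_chain (hd0 : ∀ u v : A, d (u * v) = d u * v + u * d v)
    {m : ℕ} (f : MultilinearMap k (fun _ : Fin m => A) M) (b : Fin (m+1) → A) :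
    hochCob k A M l r (psi0 d ⇑f) b
      = psi0 d (hochCob k A M l r ⇑f) b
        - ((-1:ℤ)^(m+1)) • l (d (b 0)) (f (Fin.tail b))
        - r (f (Fin.init b)) (d (b (Fin.last m))) := by
  have hexp : psi0 d (hochCob k A M l r ⇑f) b
      = ∑ i ∈ Finset.range (m+2), ((-1:ℤ)^(m+1-i)) •
          ∑ j ∈ Finset.range (m+1), face l r i (⇑f) (updN d j b) := by
    rw [psi0,
      Finset.sum_congr rfl (fun j _ => hochCob_face l r (⇑f) (updN d j b)),
      Finset.sum_comm]
    exact Finset.sum_congr rfl fun i _ => (Finset.smul_sum).symm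
  rw [hexp, hochCob_face]
  rw [Finset.sum_range_succ' _ (m+1), Finset.sum_range_succ]
  rw [Finset.sum_range_succ' (fun i => ((-1:ℤ)^(m+1-i)) •
        ∑ j ∈ Finset.range (m+1), face l r i (⇑f) (updN d j b)) (m+1),
    Finset.sum_range_succ]
  rw [show (∑ i ∈ Finset.range m, ((-1:ℤ)^(m+1-(i+1))) •
        ∑ j ∈ Finset.range (m+1), face l r (i+1) (⇑f) (updN d j b))
      = ∑ i ∈ Finset.range m, ((-1:ℤ)^(m+1-(i+1))) • face l r (i+1) (psi0 d ⇑f) b from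
    Finset.sum_congr rfl (fun i hi => by
      rw [psi0_face_mid l r d hd0 f (Finset.mem_range.mp hi) b])]
  rw [psi0_face_zero l r d (⇑f) b, psi0_face_top l r d (⇑f) b, smul_add, smul_add]
  rw [Nat.sub_zero, Nat.sub_self, pow_zero, one_smul, one_smul]
  abel


lemma main_chain
    (hd : ∀ u v : A, d (u * v) = d u * v + u * d v + lam • (d u * d v))
    (hdl : ∀ (a : A) (x : M), dM (l a x) = l (d a) x + l a (dM x) + lam • l (d a) (dM x))
    (hdr : ∀ (a : A) (x : M), dM (r x a) = r x (d a) + r (dM x) a + lam • r (dM x) (d a))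
    {m : ℕ} (f : MultilinearMap k (fun _ : Fin m => A) M) :
    hochDOCob k lam A M l r d (PhiMap k lam A M d dM ⇑f)
      = PhiMap k lam A M d dM (hochCob k A M l r ⇑f) := by
  rcases eq_or_ne lam 0 with rfl | hlam
  · -- weight zero
    have hd0 : ∀ u v : A, d (u * v) = d u * v + u * d v := by
      intro u v; rw [hd u v, zero_smul, add_zero]
    rw [DO_zero]
    funext b
    have hPhi : PhiMap k 0 A M d dM (⇑f) = fun a => psi0 d (⇑f) a - dM (f a) :=
      funext (fun a => PhiMap_zero d dM (⇑f) a)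
    rw [hPhi, hochCob_subF, psi0_chain l r d hd0 f b]
    have hdm : hochCob k A M l r (fun x => dM (f x)) b
        = dM (hochCob k A M l r (⇑f) b)
          - ((-1:ℤ)^(m+1)) • l (d (b 0)) (f (Fin.tail b))
          - r (f (Fin.init b)) (d (b (Fin.last m))) := by
      have h0 := DO_dM l r 0 d dM hdl hdr (⇑f) b
      rw [DO_zero] at h0
      exact h0
    rw [hdm, PhiMap_zero d dM (hochCob k A M l r ⇑f) b, psi0]
    abel
  · -- nonzero weight
    have hG : ∀ (p : ℕ) (g : MultilinearMap k (fun _ : Fin p => A) M) (a : Fin p → A),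
        PhiMap k lam A M d dM (⇑g) a
          = lam⁻¹ • (g (fun j => a j + lam • d (a j)) - g a) - dM (g a) := by
      intro p g a
      simp only [PhiMap]
      rw [← G_lemma lam d g a, inv_smul_smul₀ hlam]
    funext b
    rw [hochDOCob_eq_hochCob]
    have hPhiF : PhiMap k lam A M d dM (⇑f)
        = fun a => (lam⁻¹ • f (fun j => a j + lam • d (a j)) - lam⁻¹ • f a) - dM (f a) := by
      funext a
      rw [hG m f a, smul_sub]
    rw [hPhiF, hochCob_subF, hochCob_subF, hochCob_smulF, hochCob_smulF]
    have hconj : hochCob k A M (l.comp (Dop lam d)) (LinearMap.compl₂ r (Dop lam d))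
          (fun a => f (fun j => a j + lam • d (a j))) b
        = hochCob k A M l r (⇑f) (fun j => b j + lam • d (b j)) := by
      have h0 := DO_conj l r lam d hd (⇑f) b
      rw [hochDOCob_eq_hochCob] at h0
      exact h0
    have hE : hochCob k A M (l.comp (Dop lam d)) (LinearMap.compl₂ r (Dop lam d)) (⇑f) b
        = hochCob k A M l r (⇑f) b
          + lam • (((-1:ℤ)^(m+1)) • l (d (b 0)) (f (Fin.tail b))
                    + r (f (Fin.init b)) (d (b (Fin.last m)))) := by
      have h0 := DO_expand l r lam d (⇑f) b
      rw [hochDOCob_eq_hochCob] at h0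
      exact h0
    have hdm : hochCob k A M (l.comp (Dop lam d)) (LinearMap.compl₂ r (Dop lam d))
          (fun x => dM (f x)) b
        = dM (hochCob k A M l r (⇑f) b)
          - ((-1:ℤ)^(m+1)) • l (d (b 0)) (f (Fin.tail b))
          - r (f (Fin.init b)) (d (b (Fin.last m))) := by
      have h0 := DO_dM l r lam d dM hdl hdr (⇑f) b
      rw [hochDOCob_eq_hochCob] at h0
      exact h0
    rw [hconj, hE, hdm]
    rw [show hochCob k A M l r (⇑f) = ⇑(hochCobML l r f) from rfl,
      hG (m+1) (hochCobML l r f) b, hochCobML_coe, smul_sub, smul_add,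
      smul_add, smul_add, inv_smul_smul₀ hlam, inv_smul_smul₀ hlam]
    abel


lemma hochDOCob_subF {n : ℕ} (F G : (Fin n → A) → M) (a : Fin (n+1) → A) :
    hochDOCob k lam A M l r d (fun b => F b - G b) a
      = hochDOCob k lam A M l r d F a - hochDOCob k lam A M l r d G a := by
  simp only [hochDOCob_eq_hochCob]
  exact hochCob_subF _ _ F G a

lemma hochDOCob_negF {n : ℕ} (F : (Fin n → A) → M) (a : Fin (n+1) → A) :
    hochDOCob k lam A M l r d (fun b => -(F b)) a = -(hochDOCob k lam A M l r d F a) := by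
  simp only [hochDOCob_eq_hochCob]
  exact hochCob_negF _ _ F a

end DA

/-- `∂^{n+1}_DA ∘ ∂ⁿ_DA = 0` for all `n ≥ 0`, where
`C⁰_DA(A,M) = M`, `Cⁿ_DA(A,M) = Cⁿ_Alg(A,M) ⊕ C^{n−1}_DO(A,M)` for `n ≥ 1`,
`∂⁰_DA(x) = (∂⁰_Alg x, −Φ⁰ x)` and `∂ⁿ_DA(f,g) = (∂ⁿ_Alg f, −∂^{n−1}_DO g − Φⁿ f)`.
The statement is given componentwise: first the case `n = 0`, then the case `n ≥ 1`. -/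
theorem stmt5 (k : Type*) [Field k] [CharZero k] (lam : k)
    (A : Type*) [NonUnitalRing A] [Module k A]
    [SMulCommClass k A A] [IsScalarTower k A A]
    (M : Type*) [AddCommGroup M] [Module k M]
    (l : A →ₗ[k] M →ₗ[k] M) (r : M →ₗ[k] A →ₗ[k] M)
    (hl : ∀ (a b : A) (x : M), l (a * b) x = l a (l b x))
    (hr : ∀ (a b : A) (x : M), r (r x a) b = r x (a * b))
    (hlr : ∀ (a b : A) (x : M), r (l a x) b = l a (r x b))
    (d : A →ₗ[k] A)
    (hd : ∀ u v : A, d (u * v) = d u * v + u * d v + lam • (d u * d v))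
    (dM : M →ₗ[k] M)
    (hdl : ∀ (a : A) (x : M), dM (l a x) = l (d a) x + l a (dM x) + lam • l (d a) (dM x))
    (hdr : ∀ (a : A) (x : M), dM (r x a) = r x (d a) + r (dM x) a + lam • r (dM x) (d a)) :
    (∀ x : M,
        hochCob k A M l r (hochCob k A M l r (fun _ : Fin 0 → A => x)) = 0
        ∧ -(hochDOCob k lam A M l r d
              (-(PhiMap k lam A M d dM (fun _ : Fin 0 → A => x))))
            - PhiMap k lam A M d dM (hochCob k A M l r (fun _ : Fin 0 → A => x)) = 0)
    ∧ (∀ (n : ℕ) (f : MultilinearMap k (fun _ : Fin (n + 1) => A) M)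
          (g : MultilinearMap k (fun _ : Fin n => A) M),
        hochCob k A M l r (hochCob k A M l r ⇑f) = 0
        ∧ -(hochDOCob k lam A M l r d
              (-(hochDOCob k lam A M l r d ⇑g) - PhiMap k lam A M d dM ⇑f))
            - PhiMap k lam A M d dM (hochCob k A M l r ⇑f) = 0) := by
  constructor
  · intro x
    refine ⟨hochCob_hochCob l r hl hr hlr _, ?_⟩
    set f0 : MultilinearMap k (fun _ : Fin 0 => A) M :=
      MultilinearMap.constOfIsEmpty k _ x with hf0
    have hcoe : ⇑f0 = (fun _ : Fin 0 → A => x) := rfl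
    have h3 := main_chain l r lam d dM hd hdl hdr f0
    rw [hcoe] at h3
    funext b
    have e : (-(PhiMap k lam A M d dM (fun _ : Fin 0 → A => x)))
        = fun a => -(PhiMap k lam A M d dM (fun _ : Fin 0 → A => x) a) := rfl
    simp only [Pi.sub_apply, Pi.neg_apply, Pi.zero_apply]
    rw [e, hochDOCob_negF, congrFun h3 b]
    abel
  · intro n f g
    refine ⟨hochCob_hochCob l r hl hr hlr _, ?_⟩
    have h2 := hochDOCob_hochDOCob l r lam d hl hr hlr hd (⇑g)
    have h3 := main_chain l r lam d dM hd hdl hdr f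
    funext b
    have e : (-(hochDOCob k lam A M l r d ⇑g) - PhiMap k lam A M d dM ⇑f)
        = fun a => (fun y => -(hochDOCob k lam A M l r d (⇑g) y)) a
            - PhiMap k lam A M d dM (⇑f) a := rfl
    simp only [Pi.sub_apply, Pi.neg_apply, Pi.zero_apply]
    rw [e, hochDOCob_subF, hochDOCob_negF, congrFun h2 b, congrFun h3 b]
    simp only [Pi.zero_apply]
    abel
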